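/- arXiv:2202.03839 — 4 statements merged into one kernel-verified Lean document; each statement's English description precedes it below -/
import Mathlib

section
/- Let r ≥ 2 and let (α_1, …, α_r) be a tuple of positive integers with α_1 ≥ 2 and α_r ≥ 2. Then ζ(α_1, …, α_r) + (-1)^r · ζ*(α_r, …, α_1) = ∑_{k=1}^{r-1} (-1)^{k+1} · ζ*(α_k, …, α_1) · ζ(α_{k+1}, …, α_r). -/
open scoped BigOperators

/-- The multiple zeta value `ζ(a₁, …, a_r)`, as a sum over strictly increasing
tuples of positive integers. -/
noncomputable def mz (a : List ℕ) : ℝ :=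
  ∑' k : {k : Fin a.length → ℕ+ // StrictMono k},
    ∏ i, (1 : ℝ) / ((k.1 i : ℕ) : ℝ) ^ a.get i

/-- The multiple zeta-star value `ζ⋆(a₁, …, a_r)`, as a sum over weakly increasing
tuples of positive integers. -/
noncomputable def mzs (a : List ℕ) : ℝ :=
  ∑' k : {k : Fin a.length → ℕ+ // Monotone k},
    ∏ i, (1 : ℝ) / ((k.1 i : ℕ) : ℝ) ^ a.get i

/-!
Write `U(s, t)` for the part of `ζ⋆(s) ζ(t)`, viewed as a sum over pairs of a weakly increasing
`x` and a strictly increasing `y`, in which `min x < min y`. On the complementary part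
`min y ≤ min x`, moving the first entry of `y` (with the first exponent of `t = h :: t'`) to the
front of `x` is a bijection onto the pairs counted by `U(h :: s, t')`; hence
`ζ⋆(s) ζ(h :: t') = U(s, h :: t') + U(h :: s, t')`. So the alternating sum
`∑_{k=0}^{r} (-1)^k ζ⋆(α_k, …, α_1) ζ(α_{k+1}, …, α_r)`, whose last term is
`U((α_r, …, α_1), ())`, telescopes to `U((), α) = 0`; separating the terms `k = 0` and `k = r`
gives the theorem.

The sums live in `ℝ≥0∞`; passing to `ℝ` needs every product to be finite. For a weakly
increasing `m` of length `n` the largest entry carries an exponent `≥ 2`, and spreading the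
surplus `1` over all coordinates bounds the summand by `∏ i, m_i ^ (-(1 + 1/n))`, a product of
convergent `p`-series.
-/

open ENNReal

lemma Fin.monotone_cons {α : Type*} [Preorder α] {n : ℕ} {f : Fin n → α} {a : α} :
    Monotone (Fin.cons a f : Fin (n + 1) → α) ↔ (∀ j, a ≤ f j) ∧ Monotone f := by
  simp only [monotone_iff_forall_lt]
  exact Fin.liftFun_cons (· ≤ ·)

lemma Fin.exists_cons_lt_iff {α : Type*} [Preorder α] {n : ℕ} {c b : α} {x : Fin n → α}
    (hx : ∀ i, c ≤ x i) : (∃ i, (Fin.cons c x : Fin (n + 1) → α) i < b) ↔ c < b := by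
  refine ⟨fun ⟨i, hi⟩ => ?_, fun hc => ⟨0, hc⟩⟩
  cases i using Fin.cases with
  | zero => exact hi
  | succ i => exact (hx i).trans_lt hi

lemma List.get_cons_eq_cons {α : Type*} (h : α) (l : List α) :
    (h :: l).get = Fin.cons h l.get := by
  ext i
  cases i using Fin.cases <;> rfl

lemma List.ofFn_sub_eq_reverse_take {α : Type*} {n : ℕ} (f : Fin n → α) (k : ℕ) (hk : k < n) :
    List.ofFn (fun i : Fin (k + 1) => f ⟨k - i, by omega⟩) =
      ((List.ofFn f).take (k + 1)).reverse := by
  refine List.ext_getElem (by simp; omega) fun i _ _ => ?_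
  simp only [List.getElem_ofFn, List.getElem_reverse, List.getElem_take, List.length_take,
    List.length_ofFn]
  congr 1
  ext
  simp only
  omega

lemma List.ofFn_rev_eq_reverse {α : Type*} {n : ℕ} (f : Fin n → α) :
    List.ofFn (fun i : Fin n => f ⟨n - 1 - i, by omega⟩) = (List.ofFn f).reverse :=
  List.ext_getElem (by simp) fun _ _ _ => by simp

lemma List.ofFn_add_eq_drop {α : Type*} {n : ℕ} (f : Fin n → α) (k : ℕ) :
    List.ofFn (fun i : Fin (n - k) => f ⟨k + i, by omega⟩) = (List.ofFn f).drop k :=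
  List.ext_getElem (by simp) fun _ _ _ => by simp

lemma Finset.sum_range_succ_split_ends {M : Type*} [AddCommMonoid M] {n : ℕ} (hn : 1 ≤ n)
    (f : ℕ → M) :
    ∑ j ∈ Finset.range (n + 1), f j = f 0 + ∑ j ∈ Finset.range (n - 1), f (j + 1) + f n := by
  obtain ⟨n, rfl⟩ : ∃ m, n = m + 1 := ⟨n - 1, by omega⟩
  rw [Finset.sum_range_succ, Finset.sum_range_succ', Nat.add_sub_cancel, add_comm (f 0)]

lemma ENNReal.tsum_subtype_eq_ite {α : Type*} (p : α → Prop) [DecidablePred p] (f : α → ℝ≥0∞) :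
    ∑' a : {a // p a}, f a = ∑' a, if p a then f a else 0 :=
  (tsum_subtype {a | p a} f).trans (tsum_congr fun _ => Set.indicator_apply _ _ _)

lemma ENNReal.tsum_fin_zero_pi {α : Type*} (f : (Fin 0 → α) → ℝ≥0∞) :
    ∑' x, f x = f Fin.elim0 :=
  tsum_eq_single Fin.elim0 fun _ hx => (hx (funext fun i => i.elim0)).elim

lemma ENNReal.tsum_fin_succ_pi {α : Type*} {n : ℕ} (f : (Fin (n + 1) → α) → ℝ≥0∞) :
    ∑' x, f x = ∑' (c : α) (x : Fin n → α), f (Fin.cons c x) := by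
  rw [← (Fin.consEquiv fun _ => α).tsum_eq, ENNReal.tsum_prod']
  rfl

lemma ENNReal.tsum_pi_prod_eq_pow {α : Type*} (g : α → ℝ≥0∞) (n : ℕ) :
    ∑' m : Fin n → α, ∏ i, g (m i) = (∑' a, g a) ^ n := by
  induction n with
  | zero => simp
  | succ n ih =>
    simp only [ENNReal.tsum_fin_succ_pi, Fin.prod_univ_succ, Fin.cons_zero, Fin.cons_succ,
      ENNReal.tsum_mul_left, ih, ENNReal.tsum_mul_right, pow_succ']

lemma ENNReal.tsum_pnat_rpow_inv_ne_top {p : ℝ} (hp : 1 < p) :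
    ∑' k : ℕ+, (((k : ℕ) : ℝ≥0∞) ^ p)⁻¹ ≠ ∞ := by
  have hnat : Summable fun n : ℕ => ((n : NNReal) ^ p)⁻¹ := NNReal.summable_rpow_inv.2 hp
  have hsum : Summable fun k : ℕ+ => (((k : ℕ) : NNReal) ^ p)⁻¹ :=
    NNReal.summable_comp_injective hnat PNat.coe_injective
  have hcoe (k : ℕ+) : ((((k : ℕ) : NNReal) ^ p)⁻¹ : NNReal) = (((k : ℕ) : ℝ≥0∞) ^ p)⁻¹ := by
    have hk : ((k : ℕ) : NNReal) ≠ 0 := by simp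
    rw [ENNReal.coe_inv (by positivity), ENNReal.coe_rpow_of_ne_zero hk, ENNReal.coe_natCast]
  simpa only [hcoe] using ENNReal.tsum_coe_ne_top_iff_summable.2 hsum

lemma ENNReal.prod_pow_le_prod_rpow {ι : Type*} [Fintype ι] {y : ι → ℝ≥0∞} (hy : ∀ i, y i ≤ 1)
    {b : ι → ℕ} (hb : ∀ i, 1 ≤ b i) {L : ι} (hbL : 2 ≤ b L) (hyL : ∀ i, y L ≤ y i) :
    ∏ i, y i ^ b i ≤ ∏ i, y i ^ (1 + 1 / Fintype.card ι : ℝ) := by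
  classical
  have : Nonempty ι := ⟨L⟩
  have hcard : (Fintype.card ι : ℝ) ≠ 0 := Nat.cast_ne_zero.2 Fintype.card_ne_zero
  have hL : ∏ i, y i ^ b i ≤ y L * ∏ i, y i := by
    rw [← Finset.mul_prod_erase _ _ (Finset.mem_univ L),
      ← Finset.mul_prod_erase _ y (Finset.mem_univ L), ← mul_assoc, ← pow_two]
    exact mul_le_mul' (pow_le_pow_of_le_one zero_le (hy L) hbL)
      (Finset.prod_le_prod' fun i _ => pow_le_of_le_one zero_le (hy i) (by have := hb i; omega))
  have hyL_le : y L ≤ ∏ i, y i ^ (1 / Fintype.card ι : ℝ) :=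
    calc y L = ∏ _i : ι, y L ^ (1 / Fintype.card ι : ℝ) := by
          rw [Finset.prod_const, Finset.card_univ, ← ENNReal.rpow_natCast, ← ENNReal.rpow_mul,
            one_div_mul_cancel hcard, ENNReal.rpow_one]
      _ ≤ _ := Finset.prod_le_prod' fun i _ => ENNReal.rpow_le_rpow (hyL i) (by positivity)
  calc ∏ i, y i ^ b i ≤ (∏ i, y i ^ (1 / Fintype.card ι : ℝ)) * ∏ i, y i := hL.trans (by gcongr)
    _ = ∏ i, y i ^ (1 + 1 / Fintype.card ι : ℝ) := by
      rw [← Finset.prod_mul_distrib]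
      refine Finset.prod_congr rfl fun i _ => ?_
      rw [ENNReal.rpow_add_of_nonneg _ _ zero_le_one (by positivity), ENNReal.rpow_one, mul_comm]

namespace MZV

noncomputable def weight {n : ℕ} (b : Fin n → ℕ) (m : Fin n → ℕ+) : ℝ≥0∞ :=
  ∏ i, (((m i : ℕ) : ℝ≥0∞) ^ b i)⁻¹

noncomputable def zetaENN (l : List ℕ) : ℝ≥0∞ :=
  ∑' m : {m : Fin l.length → ℕ+ // StrictMono m}, weight l.get m

noncomputable def zetaStarENN (l : List ℕ) : ℝ≥0∞ :=
  ∑' m : {m : Fin l.length → ℕ+ // Monotone m}, weight l.get m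

/-- `U(s, t)`: for weakly increasing `x`, `∀ j, ∃ i, x i < y j` says `min x < min y`, and it
holds vacuously when `t = []`. -/
noncomputable def mixedZeta (s t : List ℕ) : ℝ≥0∞ :=
  ∑' (x : Fin s.length → ℕ+) (y : Fin t.length → ℕ+),
    if Monotone x ∧ StrictMono y ∧ ∀ j, ∃ i, x i < y j then weight s.get x * weight t.get y else 0

lemma weight_ne_top {n : ℕ} (b : Fin n → ℕ) (m : Fin n → ℕ+) : weight b m ≠ ∞ :=
  ENNReal.prod_ne_top fun _ _ => ENNReal.inv_ne_top.2 (pow_ne_zero _ (by simp))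

lemma toReal_weight {n : ℕ} (b : Fin n → ℕ) (m : Fin n → ℕ+) :
    (weight b m).toReal = ∏ i, (1 : ℝ) / ((m i : ℕ) : ℝ) ^ b i := by
  simp [weight, ENNReal.toReal_prod]

lemma weight_cons {n : ℕ} (h : ℕ) (b : Fin n → ℕ) (c : ℕ+) (m : Fin n → ℕ+) :
    weight (Fin.cons h b) (Fin.cons c m) = (((c : ℕ) : ℝ≥0∞) ^ h)⁻¹ * weight b m := by
  simp [weight, Fin.prod_univ_succ]

lemma _root_.mz_eq_toReal_zetaENN (l : List ℕ) : mz l = (zetaENN l).toReal := by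
  rw [zetaENN, ENNReal.tsum_toReal_eq fun _ => weight_ne_top _ _]
  simp only [toReal_weight, mz]

lemma _root_.mzs_eq_toReal_zetaStarENN (l : List ℕ) : mzs l = (zetaStarENN l).toReal := by
  rw [zetaStarENN, ENNReal.tsum_toReal_eq fun _ => weight_ne_top _ _]
  simp only [toReal_weight, mzs]

lemma zetaENN_nil : zetaENN [] = 1 := by
  classical
  rw [zetaENN, tsum_subtype_eq_ite]
  erw [ENNReal.tsum_fin_zero_pi]
  simp [weight, Subsingleton.strictMono]

lemma zetaStarENN_nil : zetaStarENN [] = 1 := by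
  classical
  rw [zetaStarENN, tsum_subtype_eq_ite]
  erw [ENNReal.tsum_fin_zero_pi]
  simp [weight, Subsingleton.monotone]

lemma zetaENN_le_zetaStarENN (l : List ℕ) : zetaENN l ≤ zetaStarENN l := by
  classical
  rw [zetaENN, zetaStarENN, tsum_subtype_eq_ite, tsum_subtype_eq_ite]
  refine ENNReal.tsum_le_tsum fun m => ?_
  split_ifs with hs hm
  · exact le_rfl
  · exact absurd hs.monotone hm
  · exact zero_le
  · exact le_rfl

lemma zetaStarENN_ne_top {l : List ℕ} (hpos : ∀ k ∈ l, 1 ≤ k)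
    (hlast : ∀ hl : l ≠ [], 2 ≤ l.getLast hl) : zetaStarENN l ≠ ∞ := by
  classical
  rcases eq_or_ne l [] with rfl | hl
  · simp [zetaStarENN_nil]
  set p : ℝ := 1 + 1 / l.length
  have hp : 1 < p := lt_add_of_pos_right 1 (by simp [List.length_pos_iff.2 hl])
  let L : Fin l.length := ⟨l.length - 1, by simp [List.length_pos_iff.2 hl]⟩
  have hbound (m : Fin l.length → ℕ+) (hm : Monotone m) :
      weight l.get m ≤ ∏ i, (((m i : ℕ) : ℝ≥0∞) ^ p)⁻¹ := by
    have hcard : p = 1 + 1 / Fintype.card (Fin l.length) := by simp [p]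
    simp only [weight, ENNReal.inv_pow, ← ENNReal.inv_rpow, hcard]
    refine ENNReal.prod_pow_le_prod_rpow (L := L) (fun i => ?_) (fun i => hpos _ (List.get_mem _ _))
      ?_ (fun i => ?_)
    · exact ENNReal.inv_le_one.2 (Nat.one_le_cast.2 (m i).pos)
    · simpa [L, List.getLast_eq_getElem] using hlast hl
    · exact ENNReal.inv_le_inv.2 (Nat.cast_le.2 (hm (Fin.le_def.2 (Nat.le_sub_one_of_lt i.isLt))))
  refine ne_top_of_le_ne_top
    (ENNReal.pow_ne_top (n := l.length) (ENNReal.tsum_pnat_rpow_inv_ne_top hp)) ?_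
  rw [← ENNReal.tsum_pi_prod_eq_pow, zetaStarENN, tsum_subtype_eq_ite]
  refine ENNReal.tsum_le_tsum fun m => ?_
  split_ifs with hm
  · exact hbound m hm
  · exact zero_le

lemma zetaStarENN_mul_zetaENN (s t : List ℕ) :
    zetaStarENN s * zetaENN t = ∑' (x : Fin s.length → ℕ+) (y : Fin t.length → ℕ+),
      if Monotone x ∧ StrictMono y then weight s.get x * weight t.get y else 0 := by
  classical
  rw [zetaStarENN, zetaENN, tsum_subtype_eq_ite, tsum_subtype_eq_ite, ← ENNReal.tsum_mul_right]
  refine tsum_congr fun x => ?_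
  rw [← ENNReal.tsum_mul_left]
  refine tsum_congr fun y => ?_
  by_cases hx : Monotone x <;> by_cases hy : StrictMono y <;> simp [hx, hy]

lemma mixedZeta_nil_right (s : List ℕ) : mixedZeta s [] = zetaStarENN s := by
  classical
  rw [zetaStarENN, tsum_subtype_eq_ite, mixedZeta]
  refine tsum_congr fun x => ?_
  erw [ENNReal.tsum_fin_zero_pi]
  simp [weight, Subsingleton.strictMono]

lemma mixedZeta_nil_cons (h : ℕ) (t : List ℕ) : mixedZeta [] (h :: t) = 0 :=
  ENNReal.tsum_eq_zero.2 fun _ => ENNReal.tsum_eq_zero.2 fun _ =>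
    if_neg fun hc => (hc.2.2 0).elim fun i _ => i.elim0

lemma mixedZeta_cons_left (s : List ℕ) (h : ℕ) (t : List ℕ) :
    mixedZeta (h :: s) t = ∑' (x : Fin s.length → ℕ+) (y : Fin (t.length + 1) → ℕ+),
      if Monotone x ∧ StrictMono y ∧ ∀ i, y 0 ≤ x i
      then weight s.get x * weight (h :: t).get y else 0 := by
  rw [mixedZeta]
  erw [ENNReal.tsum_fin_succ_pi]
  conv_rhs => enter [1, x]; rw [ENNReal.tsum_fin_succ_pi]
  rw [ENNReal.tsum_comm]
  refine tsum_congr fun x => tsum_congr fun c => tsum_congr fun y => ?_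
  simp only [List.get_cons_eq_cons, weight_cons, Fin.monotone_cons, Fin.strictMono_cons,
    Fin.cons_zero]
  refine if_congr ?_ (by ring) rfl
  constructor
  · rintro ⟨⟨hcx, hx⟩, hy, hxy⟩
    exact ⟨hx, ⟨fun j => (Fin.exists_cons_lt_iff hcx).1 (hxy j), hy⟩, hcx⟩
  · rintro ⟨hx, ⟨hcy, hy⟩, hcx⟩
    exact ⟨⟨hcx, hx⟩, hy, fun j => (Fin.exists_cons_lt_iff hcx).2 (hcy j)⟩

lemma mixedZeta_add_mixedZeta_cons (s : List ℕ) (h : ℕ) (t : List ℕ) :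
    mixedZeta s (h :: t) + mixedZeta (h :: s) t = zetaStarENN s * zetaENN (h :: t) := by
  rw [mixedZeta_cons_left, mixedZeta, zetaStarENN_mul_zetaENN, ← ENNReal.tsum_add]
  refine tsum_congr fun x => ?_
  erw [← ENNReal.tsum_add]
  refine tsum_congr fun y => ?_
  by_cases hxy : Monotone x ∧ StrictMono y
  · have hmin : (∀ j, ∃ i, x i < y j) ↔ ¬ ∀ i, y 0 ≤ x i := by
      simp only [not_forall, not_le]
      exact ⟨fun h => h 0, fun ⟨i, hi⟩ j => ⟨i, hi.trans_le (hxy.2.monotone (Fin.zero_le j))⟩⟩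
    by_cases hle : ∀ i, y 0 ≤ x i
    · rw [if_neg fun h => hmin.1 h.2.2 hle, if_pos ⟨hxy.1, hxy.2, hle⟩, if_pos hxy, zero_add]
    · rw [if_pos ⟨hxy.1, hxy.2, hmin.2 hle⟩, if_neg fun h => hle h.2.2, if_pos hxy, add_zero]
  · rw [if_neg fun h => hxy ⟨h.1, h.2.1⟩, if_neg fun h => hxy ⟨h.1, h.2.1⟩, if_neg hxy, add_zero]

lemma mixedZeta_take_drop_add_succ {l : List ℕ} {j : ℕ} (hj : j < l.length) :
    mixedZeta (l.take j).reverse (l.drop j) + mixedZeta (l.take (j + 1)).reverse (l.drop (j + 1)) =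
      zetaStarENN (l.take j).reverse * zetaENN (l.drop j) := by
  rw [List.drop_eq_getElem_cons hj, ← List.take_concat_get' l j hj, List.reverse_concat]
  exact mixedZeta_add_mixedZeta_cons _ _ _

lemma zetaStarENN_mul_zetaENN_take_drop_ne_top {l : List ℕ} (hl : l ≠ []) (hpos : ∀ k ∈ l, 1 ≤ k)
    (hhead : 2 ≤ l.head hl) (hlast : 2 ≤ l.getLast hl) (j : ℕ) :
    zetaStarENN (l.take j).reverse * zetaENN (l.drop j) ≠ ∞ := by
  refine ENNReal.mul_ne_top (zetaStarENN_ne_top ?_ ?_)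
    (ne_top_of_le_ne_top (zetaStarENN_ne_top ?_ ?_) (zetaENN_le_zetaStarENN _))
  · exact fun k hk => hpos k (List.mem_of_mem_take (List.mem_reverse.1 hk))
  · exact fun _ => by rwa [List.getLast_reverse, List.head_take]
  · exact fun k hk => hpos k (List.mem_of_mem_drop hk)
  · exact fun _ => by rwa [List.getLast_drop]

end MZV

open MZV

lemma mz_nil : mz [] = 1 := by simp [mz_eq_toReal_zetaENN, zetaENN_nil]

lemma mzs_nil : mzs [] = 1 := by simp [mzs_eq_toReal_zetaStarENN, zetaStarENN_nil]

theorem sum_range_neg_one_pow_mul_mzs_take_mul_mz_drop {l : List ℕ} (hl : l ≠ [])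
    (hpos : ∀ k ∈ l, 1 ≤ k) (hhead : 2 ≤ l.head hl) (hlast : 2 ≤ l.getLast hl) :
    ∑ j ∈ Finset.range (l.length + 1),
      (-1 : ℝ) ^ j * (mzs (l.take j).reverse * mz (l.drop j)) = 0 := by
  set u : ℕ → ℝ := fun j => (mixedZeta (l.take j).reverse (l.drop j)).toReal
  have hstep : ∀ j < l.length, (-1 : ℝ) ^ j * (mzs (l.take j).reverse * mz (l.drop j)) =
      (-1) ^ j * u j - (-1) ^ (j + 1) * u (j + 1) := by
    intro j hj
    have hfin := zetaStarENN_mul_zetaENN_take_drop_ne_top hl hpos hhead hlast j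
    rw [← mixedZeta_take_drop_add_succ hj] at hfin
    rw [mzs_eq_toReal_zetaStarENN, mz_eq_toReal_zetaENN, ← ENNReal.toReal_mul,
      ← mixedZeta_take_drop_add_succ hj,
      ENNReal.toReal_add (ENNReal.add_ne_top.1 hfin).1 (ENNReal.add_ne_top.1 hfin).2]
    ring
  have hu0 : u 0 = 0 := by
    obtain ⟨h, t, rfl⟩ := List.exists_cons_of_ne_nil hl
    simp [u, mixedZeta_nil_cons]
  have hlast_term : mzs (l.take l.length).reverse * mz (l.drop l.length) = u l.length := by
    simp [u, mzs_eq_toReal_zetaStarENN, mz_eq_toReal_zetaENN, zetaENN_nil, mixedZeta_nil_right]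
  rw [Finset.sum_range_succ, Finset.sum_congr rfl fun j hj => hstep j (Finset.mem_range.1 hj),
    Finset.sum_range_sub', hu0, hlast_term]
  ring

/-- For a tuple `(α₁, …, α_r)` of positive integers with `r ≥ 2`, `α₁ ≥ 2` and `α_r ≥ 2`,
`ζ(α₁,…,α_r) + (-1)^r ζ⋆(α_r,…,α₁) = ∑_{k=1}^{r-1} (-1)^{k+1} ζ⋆(α_k,…,α₁) ζ(α_{k+1},…,α_r)`. -/
theorem mz_add_mzs_reverse (r : ℕ) (hr : 2 ≤ r) (a : Fin r → ℕ)
    (hpos : ∀ i, 1 ≤ a i)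
    (h1 : 2 ≤ a ⟨0, by omega⟩) (hlast : 2 ≤ a ⟨r - 1, by omega⟩) :
    mz (List.ofFn a) +
      (-1 : ℝ) ^ r * mzs (List.ofFn (fun i : Fin r => a ⟨r - 1 - i.1, by omega⟩)) =
    ∑ j : Fin (r - 1),
      (-1 : ℝ) ^ ((j.1 + 1) + 1) *
        mzs (List.ofFn (fun i : Fin (j.1 + 1) =>
          a ⟨j.1 - i.1, by have := j.isLt; omega⟩)) *
        mz (List.ofFn (fun i : Fin (r - (j.1 + 1)) =>
          a ⟨j.1 + 1 + i.1, by have := i.isLt; omega⟩)) := by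
  set l := List.ofFn a
  have hl : l ≠ [] := by simp [l]; omega
  have key := sum_range_neg_one_pow_mul_mzs_take_mul_mz_drop hl
    (fun k hk => by obtain ⟨i, rfl⟩ := List.mem_ofFn.1 hk; exact hpos i)
    (by rwa [List.head_ofFn]) (by rwa [List.getLast_ofFn])
  rw [Finset.sum_range_succ_split_ends (List.length_pos_iff.2 hl)] at key
  simp only [List.take_length, List.drop_length, List.take_zero, List.drop_zero, List.reverse_nil,
    mz_nil, mzs_nil] at key
  simp only [l, List.length_ofFn] at key
  have hneg : ∑ j ∈ Finset.range (r - 1),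
      (-1 : ℝ) ^ (j + 1 + 1) * mzs (l.take (j + 1)).reverse * mz (l.drop (j + 1)) =
      -∑ j ∈ Finset.range (r - 1),
        (-1 : ℝ) ^ (j + 1) * (mzs (l.take (j + 1)).reverse * mz (l.drop (j + 1))) := by
    rw [← Finset.sum_neg_distrib]
    exact Finset.sum_congr rfl fun j _ => by ring
  rw [List.ofFn_rev_eq_reverse, Finset.sum_congr rfl fun (j : Fin (r - 1)) _ => by
    rw [List.ofFn_sub_eq_reverse_take a j.1 (by omega), List.ofFn_add_eq_drop a (j.1 + 1)],
    Fin.sum_univ_eq_sum_range (fun j => (-1 : ℝ) ^ (j + 1 + 1) * mzs (l.take (j + 1)).reverse *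
      mz (l.drop (j + 1)))]
  linear_combination key - hneg
end

section
/- Let (α_1, …, α_r) and (β_1, …, β_m) be tuples of positive integers with r ≥ 1, m ≥ 1, α_r ≥ 2 and β_m ≥ 2. Then ζ(α_1, …, α_r) · ζ*(β_1, …, β_m) = Z_U(α_1, …, α_r; β_1, …, β_m) + Z_U(α_1, …, α_r, β_m; β_1, …, β_{m-1}). -/
open scoped BigOperators

/-- `Z_U(α; β)`: sum over `1 ≤ k₁ < ⋯ < k_r` and `1 ≤ ℓ₁ ≤ ⋯ ≤ ℓ_m ≤ k_r` of
`k₁^{-α₁} ⋯ k_r^{-α_r} ℓ₁^{-β₁} ⋯ ℓ_m^{-β_m}` (the `ℓ`-sum is `1` when `m = 0`). -/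
noncomputable def ZU (a b : List ℕ) : ℝ :=
  ∑' p : {p : (Fin a.length → ℕ+) × (Fin b.length → ℕ+) //
      StrictMono p.1 ∧ Monotone p.2 ∧
      ∀ (i : Fin a.length) (j : Fin b.length), i.1 = a.length - 1 → p.2 j ≤ p.1 i},
    (∏ i, (1 : ℝ) / ((p.1.1 i : ℕ) : ℝ) ^ a.get i) *
      ∏ j, (1 : ℝ) / ((p.1.2 j : ℕ) : ℝ) ^ b.get j

/-- `Z_L(α; β)`: sum over `1 ≤ k₁ < ⋯ < k_r` and `k₁ ≤ ℓ₁ ≤ ⋯ ≤ ℓ_m` of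
`k₁^{-α₁} ⋯ k_r^{-α_r} ℓ₁^{-β₁} ⋯ ℓ_m^{-β_m}` (the `ℓ`-sum is `1` when `m = 0`). -/
noncomputable def ZL (a b : List ℕ) : ℝ :=
  ∑' p : {p : (Fin a.length → ℕ+) × (Fin b.length → ℕ+) //
      StrictMono p.1 ∧ Monotone p.2 ∧
      ∀ (i : Fin a.length) (j : Fin b.length), i.1 = 0 → p.1 i ≤ p.2 j},
    (∏ i, (1 : ℝ) / ((p.1.1 i : ℕ) : ℝ) ^ a.get i) *
      ∏ j, (1 : ℝ) / ((p.1.2 j : ℕ) : ℝ) ^ b.get j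

/-- `Z_B(α; β)`: sum over `1 ≤ k₁ < ⋯ < k_r` and `k₁ ≤ ℓ₁ ≤ ⋯ ≤ ℓ_m ≤ k_r` of
`k₁^{-α₁} ⋯ k_r^{-α_r} ℓ₁^{-β₁} ⋯ ℓ_m^{-β_m}` (the `ℓ`-sum is `1` when `m = 0`). -/
noncomputable def ZB (a b : List ℕ) : ℝ :=
  ∑' p : {p : (Fin a.length → ℕ+) × (Fin b.length → ℕ+) //
      StrictMono p.1 ∧ Monotone p.2 ∧
      (∀ (i : Fin a.length) (j : Fin b.length), i.1 = 0 → p.1 i ≤ p.2 j) ∧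
      ∀ (i : Fin a.length) (j : Fin b.length), i.1 = a.length - 1 → p.2 j ≤ p.1 i},
    (∏ i, (1 : ℝ) / ((p.1.1 i : ℕ) : ℝ) ^ a.get i) *
      ∏ j, (1 : ℝ) / ((p.1.2 j : ℕ) : ℝ) ^ b.get j

/-!
Expand `ζ(α) ζ⋆(β)` as one sum over pairs `(k, ℓ)` with `k` strictly and `ℓ` weakly increasing,
and split it according to whether `ℓ_m ≤ k_r`. The pairs with `ℓ_m ≤ k_r` index `Z_U(α; β)`;
for the others, moving `ℓ_m` to the end of `k` is a bijection onto the index set of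
`Z_U(α, β_m; β₁, …, β_{m-1})`. The rearrangements are done in `ℝ≥0∞`, where they need no
summability; since `ζ(α) ≤ ζ⋆(α) ≤ 2^r` is finite, the identity then descends to `ℝ`.
-/

open scoped ENNReal
open Finset Function Relator

section TupleOrder

variable {α : Type*} {n : ℕ}

lemma Fin.liftFun_snoc (r : α → α → Prop) {f : Fin n → α} {x : α} :
    ((· < ·) ⇒ r) (Fin.snoc f x : Fin (n + 1) → α) (Fin.snoc f x) ↔
      ((· < ·) ⇒ r) f f ∧ ∀ i, r (f i) x := by
  refine ⟨fun h ↦ ⟨fun i j hij ↦ ?_, fun i ↦ ?_⟩, fun ⟨hf, hx⟩ i j hij ↦ ?_⟩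
  · simpa using h (Fin.castSucc_lt_castSucc_iff.2 hij)
  · simpa using h (Fin.castSucc_lt_last i)
  · induction j using Fin.lastCases with
    | last =>
      induction i using Fin.lastCases with
      | last => exact absurd hij (lt_irrefl _)
      | cast i => simpa using hx i
    | cast j =>
      induction i using Fin.lastCases with
      | last => exact absurd hij (not_lt.2 (Fin.le_last _))
      | cast i => simpa using hf (Fin.castSucc_lt_castSucc_iff.1 hij)

lemma Fin.strictMono_snoc_iff [Preorder α] {f : Fin n → α} {x : α} :
    StrictMono (Fin.snoc f x : Fin (n + 1) → α) ↔ StrictMono f ∧ ∀ i, f i < x :=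
  Fin.liftFun_snoc (· < ·)

lemma Fin.monotone_snoc_iff [Preorder α] {f : Fin n → α} {x : α} :
    Monotone (Fin.snoc f x : Fin (n + 1) → α) ↔ Monotone f ∧ ∀ i, f i ≤ x := by
  simpa only [monotone_iff_forall_lt, LiftFun] using Fin.liftFun_snoc (α := α) (· ≤ ·)

end TupleOrder

@[simps]
def Fin.moveLastEquiv (α : Type*) (r m : ℕ) :
    (Fin r → α) × (Fin (m + 1) → α) ≃ (Fin (r + 1) → α) × (Fin m → α) where
  toFun p := (Fin.snoc p.1 (p.2 (Fin.last m)), Fin.init p.2)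
  invFun p := (Fin.init p.1, Fin.snoc p.2 (p.1 (Fin.last r)))
  left_inv p := by simp
  right_inv p := by simp

lemma ENNReal.tsum_subtype_eq_tsum_and_add_tsum_and_not {α : Type*} (p q : α → Prop)
    (f : α → ℝ≥0∞) :
    ∑' x : {x // p x}, f x = ∑' x : {x // p x ∧ q x}, f x + ∑' x : {x // p x ∧ ¬q x}, f x := by
  have hunion : {x | p x ∧ q x} ∪ {x | p x ∧ ¬q x} = {x | p x} := by ext; simp; tauto
  have hdisj : Disjoint {x | p x ∧ q x} {x | p x ∧ ¬q x} :=
    Set.disjoint_left.2 fun _ h h' ↦ h'.2 h.2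
  have := ENNReal.summable.tsum_union_disjoint (f := f) hdisj ENNReal.summable
  rwa [hunion] at this

noncomputable def mzTerm {n : ℕ} (e : Fin n → ℕ) (k : Fin n → ℕ+) : ℝ≥0∞ :=
  ∏ i, ((k i : ℕ) : ℝ≥0∞)⁻¹ ^ e i

lemma mzTerm_ne_top {n : ℕ} (e : Fin n → ℕ) (k : Fin n → ℕ+) : mzTerm e k ≠ ⊤ :=
  ENNReal.prod_ne_top fun i _ ↦ ENNReal.pow_ne_top (ENNReal.inv_ne_top.2 (by simp))

lemma toReal_mzTerm {n : ℕ} (e : Fin n → ℕ) (k : Fin n → ℕ+) :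
    (mzTerm e k).toReal = ∏ i, (1 : ℝ) / ((k i : ℕ) : ℝ) ^ e i := by
  simp [mzTerm, ENNReal.toReal_prod, inv_pow]

lemma mzTerm_eq_mul_mzTerm_tail {n : ℕ} (e : Fin (n + 1) → ℕ) (k : Fin (n + 1) → ℕ+) :
    mzTerm e k = ((k 0 : ℕ) : ℝ≥0∞)⁻¹ ^ e 0 * mzTerm (Fin.tail e) (Fin.tail k) :=
  Fin.prod_univ_succ _

lemma mzTerm_eq_mzTerm_init_mul {n : ℕ} (e : Fin (n + 1) → ℕ) (k : Fin (n + 1) → ℕ+) :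
    mzTerm e k =
      mzTerm (Fin.init e) (Fin.init k) * ((k (Fin.last n) : ℕ) : ℝ≥0∞)⁻¹ ^ e (Fin.last n) :=
  Fin.prod_univ_castSucc _

lemma mzTerm_snoc {n : ℕ} (e : Fin n → ℕ) (k : Fin n → ℕ+) (c : ℕ) (x : ℕ+) :
    mzTerm (Fin.snoc e c) (Fin.snoc k x) = mzTerm e k * ((x : ℕ) : ℝ≥0∞)⁻¹ ^ c := by
  simp [mzTerm_eq_mzTerm_init_mul]

lemma inv_pow_le_inv_sq (x : ℕ+) {e : ℕ} (he : 2 ≤ e) :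
    ((x : ℕ) : ℝ≥0∞)⁻¹ ^ e ≤ ((x : ℕ) : ℝ≥0∞)⁻¹ ^ 2 :=
  pow_le_pow_right_of_le_one' (ENNReal.inv_le_one.2 (Nat.one_le_cast.2 x.pos)) he

lemma sum_inv_sq_ge_le (c : ℕ+) (s : Finset {x : ℕ+ // c ≤ x}) :
    ∑ x ∈ s, ((x : ℕ) : ℝ≥0∞)⁻¹ ^ 2 ≤ 2 / (c : ℕ) := by
  set t := s.image fun x ↦ ((x.1 : ℕ+) : ℕ)
  obtain ⟨N, hN⟩ : ∃ N, t ⊆ Ioo ((c : ℕ) - 1) N := by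
    refine ⟨t.sup id + 1, fun i hi ↦ mem_Ioo.2 ⟨?_, Nat.lt_succ_of_le (le_sup (f := id) hi)⟩⟩
    obtain ⟨x, -, rfl⟩ := mem_image.1 hi
    exact Nat.sub_one_lt_of_le c.pos (PNat.coe_le_coe _ _ |>.2 x.2)
  have hreal : ∑ i ∈ Ioo ((c : ℕ) - 1) N, ((i : ℝ) ^ 2)⁻¹ ≤ 2 / (c : ℕ) := by
    simpa [Nat.sub_add_cancel c.pos] using sum_Ioo_inv_sq_le (α := ℝ) ((c : ℕ) - 1) N
  calc ∑ x ∈ s, ((x : ℕ) : ℝ≥0∞)⁻¹ ^ 2 = ∑ i ∈ t, (i : ℝ≥0∞)⁻¹ ^ 2 :=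
        (sum_image (f := fun i : ℕ ↦ (i : ℝ≥0∞)⁻¹ ^ 2) fun _ _ _ _ h ↦
          Subtype.ext (PNat.coe_injective h)).symm
    _ ≤ ∑ i ∈ Ioo ((c : ℕ) - 1) N, ENNReal.ofReal ((i : ℝ) ^ 2)⁻¹ := by
        refine (sum_le_sum_of_subset hN).trans_eq (sum_congr rfl fun i hi ↦ ?_)
        have : 0 < i := by have := (mem_Ioo.1 hi).1; omega
        rw [ENNReal.ofReal_inv_of_pos (by positivity), ENNReal.ofReal_pow (by positivity),
          ENNReal.ofReal_natCast, ENNReal.inv_pow]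
    _ = ENNReal.ofReal (∑ i ∈ Ioo ((c : ℕ) - 1) N, ((i : ℝ) ^ 2)⁻¹) :=
        (ENNReal.ofReal_sum_of_nonneg fun _ _ ↦ by positivity).symm
    _ ≤ 2 / (c : ℕ) := by
        refine (ENNReal.ofReal_le_ofReal hreal).trans_eq ?_
        rw [ENNReal.ofReal_div_of_pos (by simp)]
        simp

lemma tsum_inv_sq_ge_le (c : ℕ+) :
    ∑' x : {x : ℕ+ // c ≤ x}, ((x : ℕ) : ℝ≥0∞)⁻¹ ^ 2 ≤ 2 / (c : ℕ) :=
  ENNReal.summable.tsum_le_of_sum_le (sum_inv_sq_ge_le c)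

lemma inv_pow_mul_div_le_mul_inv_sq (x : ℕ+) {e : ℕ} (he : 1 ≤ e) (C : ℝ≥0∞) :
    ((x : ℕ) : ℝ≥0∞)⁻¹ ^ e * (C / (x : ℕ)) ≤ C * ((x : ℕ) : ℝ≥0∞)⁻¹ ^ 2 :=
  calc ((x : ℕ) : ℝ≥0∞)⁻¹ ^ e * (C / (x : ℕ)) = C * ((x : ℕ) : ℝ≥0∞)⁻¹ ^ (e + 1) := by
        rw [div_eq_mul_inv, pow_succ]; ring
    _ ≤ C * ((x : ℕ) : ℝ≥0∞)⁻¹ ^ 2 := mul_le_mul_right (inv_pow_le_inv_sq x (by omega)) C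

/-- Peeling off the first entry `x ≥ c` leaves a sum bounded by induction by `C / x`, and
`x^{-b₀} · C / x ≤ C / x²` sums over `x ≥ c` to at most `2 C / c`. -/
lemma tsum_mzTerm_monotone_le {m : ℕ} (b : Fin (m + 1) → ℕ) (hb : ∀ j, 1 ≤ b j)
    (hlast : 2 ≤ b (Fin.last m)) (c : ℕ+) :
    ∑' l : {l : Fin (m + 1) → ℕ+ // Monotone l ∧ c ≤ l 0}, mzTerm b l ≤ 2 ^ (m + 1) / (c : ℕ) := by
  induction m generalizing c with
  | zero =>
    let F (l : {l : Fin 1 → ℕ+ // Monotone l ∧ c ≤ l 0}) : {x : ℕ+ // c ≤ x} := ⟨l.1 0, l.2.2⟩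
    have hF : Injective F := fun l l' h ↦
      Subtype.ext (funext fun i ↦ by rw [Fin.fin_one_eq_zero i]; exact congrArg Subtype.val h)
    calc ∑' l : {l : Fin 1 → ℕ+ // Monotone l ∧ c ≤ l 0}, mzTerm b l
        ≤ ∑' l, (((F l : ℕ+) : ℕ) : ℝ≥0∞)⁻¹ ^ 2 :=
          ENNReal.tsum_le_tsum fun l ↦ by
            simpa [mzTerm, F] using inv_pow_le_inv_sq (l.1 0) hlast
      _ ≤ ∑' x : {x : ℕ+ // c ≤ x}, ((x : ℕ) : ℝ≥0∞)⁻¹ ^ 2 :=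
          ENNReal.tsum_comp_le_tsum_of_injective hF _
      _ ≤ 2 ^ (0 + 1) / (c : ℕ) := by simpa using tsum_inv_sq_ge_le c
  | succ m ih =>
    let F (l : {l : Fin (m + 2) → ℕ+ // Monotone l ∧ c ≤ l 0}) :
        Σ x : {x : ℕ+ // c ≤ x}, {t : Fin (m + 1) → ℕ+ // Monotone t ∧ x.1 ≤ t 0} :=
      ⟨⟨l.1 0, l.2.2⟩, ⟨Fin.tail l.1, l.2.1.comp (Fin.strictMono_succ.monotone),
        l.2.1 (Fin.zero_le _)⟩⟩
    have hF : Injective F := fun l l' h ↦ Subtype.ext <| by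
      simpa [F] using congrArg (fun p ↦ (Fin.cons p.1.1 p.2.1 : Fin (m + 2) → ℕ+)) h
    have hb' : 2 ≤ Fin.tail b (Fin.last m) := by simpa [Fin.tail] using hlast
    calc ∑' l : {l : Fin (m + 2) → ℕ+ // Monotone l ∧ c ≤ l 0}, mzTerm b l
        = ∑' l, (((F l).1 : ℕ+) : ℝ≥0∞)⁻¹ ^ b 0 * mzTerm (Fin.tail b) (F l).2 := by
          simp only [mzTerm_eq_mul_mzTerm_tail b, F]
      _ ≤ ∑' p : Σ x : {x : ℕ+ // c ≤ x}, {t : Fin (m + 1) → ℕ+ // Monotone t ∧ x.1 ≤ t 0},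
            (((p.1 : ℕ+) : ℕ) : ℝ≥0∞)⁻¹ ^ b 0 * mzTerm (Fin.tail b) p.2 :=
          ENNReal.tsum_comp_le_tsum_of_injective hF _
      _ = ∑' x : {x : ℕ+ // c ≤ x}, ((x : ℕ) : ℝ≥0∞)⁻¹ ^ b 0 *
            ∑' t : {t : Fin (m + 1) → ℕ+ // Monotone t ∧ x.1 ≤ t 0}, mzTerm (Fin.tail b) t := by
          rw [ENNReal.tsum_sigma']; simp only [ENNReal.tsum_mul_left]
      _ ≤ ∑' x : {x : ℕ+ // c ≤ x}, ((x : ℕ) : ℝ≥0∞)⁻¹ ^ b 0 * (2 ^ (m + 1) / (x.1 : ℕ)) :=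
          ENNReal.tsum_le_tsum fun x ↦ by gcongr; exact ih _ (fun j ↦ hb _) hb' x
      _ ≤ ∑' x : {x : ℕ+ // c ≤ x}, 2 ^ (m + 1) * ((x : ℕ) : ℝ≥0∞)⁻¹ ^ 2 :=
          ENNReal.tsum_le_tsum fun x ↦ inv_pow_mul_div_le_mul_inv_sq x (hb 0) _
      _ ≤ 2 ^ (m + 1) * (2 / (c : ℕ)) := by
          rw [ENNReal.tsum_mul_left]; gcongr; exact tsum_inv_sq_ge_le c
      _ = 2 ^ (m + 2) / (c : ℕ) := by rw [pow_succ _ (m + 1), mul_div_assoc]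

noncomputable def emz {n : ℕ} (e : Fin n → ℕ) : ℝ≥0∞ :=
  ∑' k : {k : Fin n → ℕ+ // StrictMono k}, mzTerm e k

noncomputable def emzs {n : ℕ} (e : Fin n → ℕ) : ℝ≥0∞ :=
  ∑' k : {k : Fin n → ℕ+ // Monotone k}, mzTerm e k

lemma emz_le_emzs {n : ℕ} (e : Fin n → ℕ) : emz e ≤ emzs e :=
  ENNReal.tsum_comp_le_tsum_of_injective
    (f := fun k : {k : Fin n → ℕ+ // StrictMono k} ↦ (⟨k.1, k.2.monotone⟩ : {k // Monotone k}))
    (fun _ _ h ↦ Subtype.ext (congrArg (fun k : {k // Monotone k} ↦ k.1) h)) fun k ↦ mzTerm e k.1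

lemma emzs_lt_top {m : ℕ} (b : Fin (m + 1) → ℕ) (hb : ∀ j, 1 ≤ b j)
    (hlast : 2 ≤ b (Fin.last m)) : emzs b < ⊤ :=
  calc emzs b = ∑' l : {l : Fin (m + 1) → ℕ+ // Monotone l ∧ 1 ≤ l 0}, mzTerm b l :=
        ((Equiv.subtypeEquivRight fun l ↦ by simp).tsum_eq fun l ↦ mzTerm b l.1).symm
    _ ≤ 2 ^ (m + 1) / ((1 : ℕ+) : ℕ) := tsum_mzTerm_monotone_le b hb hlast 1
    _ < ⊤ := by simp

noncomputable def eZU {n m : ℕ} (e : Fin n → ℕ) (f : Fin m → ℕ) : ℝ≥0∞ :=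
  ∑' p : {p : (Fin n → ℕ+) × (Fin m → ℕ+) // StrictMono p.1 ∧ Monotone p.2 ∧
      ∀ (i : Fin n) (j : Fin m), i.1 = n - 1 → p.2 j ≤ p.1 i},
    mzTerm e p.1.1 * mzTerm f p.1.2

lemma eZU_eq_tsum_forall_le_last {r m : ℕ} (a : Fin (r + 1) → ℕ) (b : Fin m → ℕ) :
    eZU a b = ∑' p : {p : (Fin (r + 1) → ℕ+) × (Fin m → ℕ+) //
        StrictMono p.1 ∧ Monotone p.2 ∧ ∀ j, p.2 j ≤ p.1 (Fin.last r)},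
      mzTerm a p.1.1 * mzTerm b p.1.2 := by
  have hcond : ∀ p : (Fin (r + 1) → ℕ+) × (Fin m → ℕ+),
      (∀ (i : Fin (r + 1)) (j : Fin m), i.1 = r + 1 - 1 → p.2 j ≤ p.1 i) ↔
        ∀ j, p.2 j ≤ p.1 (Fin.last r) :=
    fun p ↦ ⟨fun h j ↦ h _ j rfl, fun h i j hi ↦ (Fin.ext hi : i = Fin.last r) ▸ h j⟩
  exact (Equiv.subtypeEquivRight fun p ↦ and_congr_right' <| and_congr_right' (hcond p)).tsum_eq
    fun p ↦ mzTerm a p.1.1 * mzTerm b p.1.2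

lemma emz_mul_emzs_eq_tsum {n m : ℕ} (a : Fin n → ℕ) (b : Fin m → ℕ) :
    emz a * emzs b = ∑' p : {p : (Fin n → ℕ+) × (Fin m → ℕ+) // StrictMono p.1 ∧ Monotone p.2},
      mzTerm a p.1.1 * mzTerm b p.1.2 := by
  rw [emz, emzs, ← ENNReal.tsum_mul_right]
  simp only [← ENNReal.tsum_mul_left]
  rw [← ENNReal.tsum_prod]
  exact (Equiv.subtypeProdEquivProd.tsum_eq fun z ↦ mzTerm a z.1.1 * mzTerm b z.2.1).symm

section Splitting

variable {r m : ℕ} (a : Fin (r + 1) → ℕ) (b : Fin (m + 1) → ℕ)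

lemma eZU_eq_tsum_le :
    eZU a b = ∑' p : {p : (Fin (r + 1) → ℕ+) × (Fin (m + 1) → ℕ+) //
        (StrictMono p.1 ∧ Monotone p.2) ∧ p.2 (Fin.last m) ≤ p.1 (Fin.last r)},
      mzTerm a p.1.1 * mzTerm b p.1.2 := by
  have hmem : ∀ p : (Fin (r + 1) → ℕ+) × (Fin (m + 1) → ℕ+),
      (StrictMono p.1 ∧ Monotone p.2 ∧ ∀ j, p.2 j ≤ p.1 (Fin.last r)) ↔
        (StrictMono p.1 ∧ Monotone p.2) ∧ p.2 (Fin.last m) ≤ p.1 (Fin.last r) :=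
    fun _ ↦ ⟨fun ⟨hk, hl, h⟩ ↦ ⟨⟨hk, hl⟩, h _⟩,
      fun ⟨⟨hk, hl⟩, h⟩ ↦ ⟨hk, hl, fun j ↦ (hl (Fin.le_last j)).trans h⟩⟩
  rw [eZU_eq_tsum_forall_le_last]
  exact (Equiv.subtypeEquivRight hmem).tsum_eq fun p ↦ mzTerm a p.1.1 * mzTerm b p.1.2

lemma eZU_snoc_init_eq_tsum_lt :
    eZU (Fin.snoc a (b (Fin.last m))) (Fin.init b) =
      ∑' p : {p : (Fin (r + 1) → ℕ+) × (Fin (m + 1) → ℕ+) //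
        (StrictMono p.1 ∧ Monotone p.2) ∧ ¬p.2 (Fin.last m) ≤ p.1 (Fin.last r)},
      mzTerm a p.1.1 * mzTerm b p.1.2 := by
  have hmem : ∀ p : (Fin (r + 1) → ℕ+) × (Fin (m + 1) → ℕ+),
      ((StrictMono p.1 ∧ Monotone p.2) ∧ ¬p.2 (Fin.last m) ≤ p.1 (Fin.last r)) ↔
        StrictMono (Fin.moveLastEquiv ℕ+ _ _ p).1 ∧ Monotone (Fin.moveLastEquiv ℕ+ _ _ p).2 ∧
          ∀ j, (Fin.moveLastEquiv ℕ+ _ _ p).2 j ≤ (Fin.moveLastEquiv ℕ+ _ _ p).1 (Fin.last _) := by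
    rintro ⟨k, l⟩
    conv_lhs => rw [← Fin.snoc_init_self l]
    simp only [Fin.moveLastEquiv_apply, Fin.strictMono_snoc_iff, Fin.monotone_snoc_iff,
      Fin.snoc_last, not_le]
    refine ⟨fun ⟨⟨hk, hl, hl'⟩, h⟩ ↦
        ⟨⟨hk, fun i ↦ (hk.monotone (Fin.le_last i)).trans_lt ?_⟩, hl, hl'⟩,
      fun ⟨⟨hk, hk'⟩, hl, hl'⟩ ↦ ⟨⟨hk, hl, hl'⟩, hk' _⟩⟩
    simpa using h
  rw [eZU_eq_tsum_forall_le_last, ← ((Equiv.subtypeEquiv (Fin.moveLastEquiv ℕ+ _ _) hmem).tsum_eq)]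
  refine tsum_congr fun p ↦ ?_
  simp only [Equiv.subtypeEquiv_apply, Fin.moveLastEquiv_apply, mzTerm_snoc]
  conv_rhs => rw [mzTerm_eq_mzTerm_init_mul b]
  ring

theorem emz_mul_emzs :
    emz a * emzs b = eZU a b + eZU (Fin.snoc a (b (Fin.last m))) (Fin.init b) := by
  rw [emz_mul_emzs_eq_tsum, eZU_eq_tsum_le, eZU_snoc_init_eq_tsum_lt]
  exact ENNReal.tsum_subtype_eq_tsum_and_add_tsum_and_not
    (α := (Fin (r + 1) → ℕ+) × (Fin (m + 1) → ℕ+)) (fun p ↦ StrictMono p.1 ∧ Monotone p.2)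
    (fun p ↦ p.2 (Fin.last m) ≤ p.1 (Fin.last r)) fun p ↦ mzTerm a p.1 * mzTerm b p.2

end Splitting

lemma mz_eq_toReal_emz (l : List ℕ) : mz l = (emz l.get).toReal := by
  simp only [mz, emz, ENNReal.tsum_toReal_eq fun _ ↦ mzTerm_ne_top _ _, toReal_mzTerm]

lemma mzs_eq_toReal_emzs (l : List ℕ) : mzs l = (emzs l.get).toReal := by
  simp only [mzs, emzs, ENNReal.tsum_toReal_eq fun _ ↦ mzTerm_ne_top _ _, toReal_mzTerm]

lemma ZU_eq_toReal_eZU (l l' : List ℕ) : ZU l l' = (eZU l.get l'.get).toReal := by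
  simp only [ZU, eZU, ENNReal.tsum_toReal_eq fun _ ↦ ENNReal.mul_ne_top (mzTerm_ne_top _ _)
    (mzTerm_ne_top _ _), ENNReal.toReal_mul, toReal_mzTerm]

lemma apply_comp_finCast {X : Type*} (F : ∀ n, (Fin n → ℕ) → X) {n n' : ℕ} (h : n' = n)
    (a : Fin n → ℕ) : F n' (a ∘ Fin.cast h) = F n a := by
  subst h; rfl

lemma apply_get_ofFn {X : Type*} (F : ∀ n, (Fin n → ℕ) → X) {n : ℕ} (a : Fin n → ℕ) :
    F _ (List.ofFn a).get = F n a := by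
  rw [show (List.ofFn a).get = a ∘ Fin.cast List.length_ofFn from funext (List.get_ofFn a)]
  exact apply_comp_finCast F _ a

lemma mz_ofFn {n : ℕ} (a : Fin n → ℕ) : mz (List.ofFn a) = (emz a).toReal :=
  (mz_eq_toReal_emz _).trans (apply_get_ofFn (fun _ e ↦ (emz e).toReal) a)

lemma mzs_ofFn {n : ℕ} (a : Fin n → ℕ) : mzs (List.ofFn a) = (emzs a).toReal :=
  (mzs_eq_toReal_emzs _).trans (apply_get_ofFn (fun _ e ↦ (emzs e).toReal) a)

lemma ZU_ofFn {n m : ℕ} (a : Fin n → ℕ) (b : Fin m → ℕ) :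
    ZU (List.ofFn a) (List.ofFn b) = (eZU a b).toReal :=
  (ZU_eq_toReal_eZU _ _).trans <|
    (apply_get_ofFn (fun _ e ↦ (eZU e (List.ofFn b).get).toReal) a).trans
      (apply_get_ofFn (fun _ f ↦ (eZU a f).toReal) b)

/-- For tuples of positive integers with `r, m ≥ 1`, `α_r ≥ 2`, `β_m ≥ 2`:
`ζ(α) ζ⋆(β) = Z_U(α₁,…,α_r; β₁,…,β_m) + Z_U(α₁,…,α_r,β_m; β₁,…,β_{m-1})`. -/
theorem mz_mul_mzs_eq_ZU (r m : ℕ) (hr : 1 ≤ r) (hm : 1 ≤ m)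
    (a : Fin r → ℕ) (b : Fin m → ℕ)
    (hapos : ∀ i, 1 ≤ a i) (hbpos : ∀ j, 1 ≤ b j)
    (har : 2 ≤ a ⟨r - 1, by omega⟩) (hbm : 2 ≤ b ⟨m - 1, by omega⟩) :
    mz (List.ofFn a) * mzs (List.ofFn b) =
      ZU (List.ofFn a) (List.ofFn b) +
      ZU (List.ofFn (Fin.snoc a (b ⟨m - 1, by omega⟩)))
         (List.ofFn (fun j : Fin (m - 1) => b ⟨j.1, by have := j.isLt; omega⟩)) := by
  obtain ⟨r, rfl⟩ : ∃ r', r = r' + 1 := ⟨r - 1, by omega⟩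
  obtain ⟨m, rfl⟩ : ∃ m', m = m' + 1 := ⟨m - 1, by omega⟩
  have hfin : eZU a b + eZU (Fin.snoc a (b (Fin.last m))) (Fin.init b) ≠ ⊤ := by
    rw [← emz_mul_emzs]
    exact ENNReal.mul_ne_top ((emz_le_emzs a).trans_lt (emzs_lt_top a hapos har)).ne
      (emzs_lt_top b hbpos hbm).ne
  rw [mz_ofFn, mzs_ofFn, ZU_ofFn, ZU_ofFn, ← ENNReal.toReal_mul, emz_mul_emzs,
    ENNReal.toReal_add (ne_top_of_le_ne_top hfin le_self_add)
      (ne_top_of_le_ne_top hfin le_add_self)]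
  -- `m + 1 - 1` reduces to `m`: the last entry and the initial segment of `b` in the statement
  -- are `b (Fin.last m)` and `Fin.init b` up to definitional unfolding.
  rfl
end

section
/- Let (α_1, …, α_r) be a tuple of integers with α_i ≥ 2 for all 1 ≤ i ≤ r, and let 1 ≤ m ≤ r − 1. Then Z_B(α_r, …, α_{m+1}; α_1, …, α_m) = (-1)^m · ζ(α_r, …, α_1) + ∑_{k=1}^{m} (-1)^{m-k} · Z_L(α_r, …, α_{k+1}; α_1, …, α_k). -/
open scoped BigOperators

/-!
Split `Z_L(α; β₁,…,β_m)` according to whether `ℓ_m ≤ k_r` or `k_r < ℓ_m`: the first part is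
`Z_B(α; β)`, and in the second `ℓ_m` becomes a new largest strict index, which gives
`Z_B(α, β_m; β₁,…,β_{m-1})`. For `Z^{(k)} = Z(α_r,…,α_{k+1}; α₁,…,α_k)` this reads
`Z_L^{(k)} = Z_B^{(k)} + Z_B^{(k-1)}`, with `Z_B^{(0)} = ζ(α_r,…,α₁)`; unwinding the recursion with
alternating signs gives the formula. All exponents are at least `2`, so every series involved
converges absolutely and may be split and reindexed.
-/

open Finset

theorem alternating_telescope {R : Type*} [CommRing R] (x y : ℕ → R) (m : ℕ)
    (h : ∀ k < m, y (k + 1) = x (k + 1) + x k) :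
    x m = (-1) ^ m * x 0 + ∑ k ∈ range m, (-1) ^ (m - (k + 1)) * y (k + 1) := by
  induction m with
  | zero => simp
  | succ m ih =>
    have hsign : ∀ k ∈ range m, (-1 : R) ^ (m + 1 - (k + 1)) * y (k + 1) =
        -((-1) ^ (m - (k + 1)) * y (k + 1)) := fun k hk => by
      rw [show m + 1 - (k + 1) = m - (k + 1) + 1 by simp at hk; omega, pow_succ]
      ring
    rw [sum_range_succ, sum_congr rfl hsign, sum_neg_distrib, ← sub_eq_neg_add,
      h m m.lt_succ_self, ih fun k hk => h k (by omega)]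
    simp only [Nat.sub_self, pow_zero, pow_succ]
    ring

namespace Fin

variable {α : Type*} [Preorder α] {n : ℕ} {f : Fin n → α} {x : α}

theorem monotone_snoc (hf : Monotone f) (hx : ∀ i, f i ≤ x) :
    Monotone (snoc (α := fun _ => α) f x) := by
  intro i j hij
  induction j using lastCases with
  | last => induction i using lastCases <;> simp [hx]
  | cast j =>
    induction i using lastCases with
    | last => exact absurd hij (not_le.2 (castSucc_lt_last j))
    | cast i => simpa using hf (by simpa using hij)

theorem strictMono_snoc (hf : StrictMono f) (hx : ∀ i, f i < x) :
    StrictMono (snoc (α := fun _ => α) f x) := by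
  intro i j hij
  induction j using lastCases with
  | last =>
    induction i using lastCases with
    | last => exact absurd hij (lt_irrefl _)
    | cast i => simpa using hx i
  | cast j =>
    induction i using lastCases with
    | last => exact absurd hij (not_lt.2 (le_last _))
    | cast i => simpa using hf (by simpa using hij)

end Fin

theorem List.ofFn_snoc {α : Type*} {n : ℕ} (f : Fin n → α) (x : α) :
    List.ofFn (Fin.snoc (α := fun _ => α) f x) = List.ofFn f ++ [x] := by
  rw [List.ofFn_succ']
  simp

section IndexSets

variable {s k : ℕ}

noncomputable def zetaMonomial {n : ℕ} (E : Fin n → ℕ) (x : Fin n → ℕ+) : ℝ :=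
  ∏ i, (1 : ℝ) / ((x i : ℕ) : ℝ) ^ E i

theorem zetaMonomial_nonneg {n : ℕ} (E : Fin n → ℕ) (x : Fin n → ℕ+) :
    0 ≤ zetaMonomial E x :=
  prod_nonneg fun _ _ => by positivity

theorem summable_zetaMonomial {n : ℕ} {E : Fin n → ℕ} (hE : ∀ i, 2 ≤ E i) :
    Summable (zetaMonomial E) := by
  induction n with
  | zero => exact (hasSum_fintype _).summable
  | succ n ih =>
    have head : Summable fun x : ℕ+ => (1 : ℝ) / ((x : ℕ) : ℝ) ^ E 0 :=
      (Real.summable_one_div_nat_pow.2 (hE 0)).comp_injective PNat.coe_injective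
    have tail := ih (E := fun i => E i.succ) fun i => hE i.succ
    refine (Fin.consEquiv fun _ => ℕ+).summable_iff.1
      ((head.mul_of_nonneg tail (fun _ => by positivity) (zetaMonomial_nonneg _)).congr ?_)
    intro q
    simp [zetaMonomial, Fin.prod_univ_succ, mul_comm]

theorem summable_zetaMonomial_mul {A : Fin s → ℕ} {B : Fin k → ℕ} (hA : ∀ i, 2 ≤ A i)
    (hB : ∀ j, 2 ≤ B j) : Summable fun p : (Fin s → ℕ+) × (Fin k → ℕ+) =>
      zetaMonomial A p.1 * zetaMonomial B p.2 :=
  (summable_zetaMonomial hA).mul_of_nonneg (summable_zetaMonomial hB)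
    (zetaMonomial_nonneg A) (zetaMonomial_nonneg B)

def lowerIndex (s k : ℕ) : Set ((Fin s → ℕ+) × (Fin k → ℕ+)) :=
  {p | StrictMono p.1 ∧ Monotone p.2 ∧ ∀ (i : Fin s) (j : Fin k), i.1 = 0 → p.1 i ≤ p.2 j}

def boundedIndex (s k : ℕ) : Set ((Fin s → ℕ+) × (Fin k → ℕ+)) :=
  {p | StrictMono p.1 ∧ Monotone p.2 ∧ (∀ (i : Fin s) (j : Fin k), i.1 = 0 → p.1 i ≤ p.2 j) ∧
    ∀ (i : Fin s) (j : Fin k), i.1 = s - 1 → p.2 j ≤ p.1 i}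

noncomputable def ZLFin (A : Fin s → ℕ) (B : Fin k → ℕ) : ℝ :=
  ∑' p : lowerIndex s k, zetaMonomial A p.1.1 * zetaMonomial B p.1.2

noncomputable def ZBFin (A : Fin s → ℕ) (B : Fin k → ℕ) : ℝ :=
  ∑' p : boundedIndex s k, zetaMonomial A p.1.1 * zetaMonomial B p.1.2

theorem ZL_eq_ZLFin (a b : List ℕ) : ZL a b = ZLFin a.get b.get := rfl

theorem ZB_eq_ZBFin (a b : List ℕ) : ZB a b = ZBFin a.get b.get := rfl

theorem ZLFin_cast {s' k' : ℕ} (hs : s = s') (hk : k = k') (A : Fin s → ℕ) (B : Fin k → ℕ) :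
    ZLFin A B = ZLFin (A ∘ Fin.cast hs.symm) (B ∘ Fin.cast hk.symm) := by
  subst hs hk; rfl

theorem ZBFin_cast {s' k' : ℕ} (hs : s = s') (hk : k = k') (A : Fin s → ℕ) (B : Fin k → ℕ) :
    ZBFin A B = ZBFin (A ∘ Fin.cast hs.symm) (B ∘ Fin.cast hk.symm) := by
  subst hs hk; rfl

theorem ZL_ofFn (A : Fin s → ℕ) (B : Fin k → ℕ) :
    ZL (List.ofFn A) (List.ofFn B) = ZLFin A B := by
  rw [ZL_eq_ZLFin, ZLFin_cast List.length_ofFn List.length_ofFn]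
  congr 1 <;> funext i <;> simp

theorem ZB_ofFn (A : Fin s → ℕ) (B : Fin k → ℕ) :
    ZB (List.ofFn A) (List.ofFn B) = ZBFin A B := by
  rw [ZB_eq_ZBFin, ZBFin_cast List.length_ofFn List.length_ofFn]
  congr 1 <;> funext i <;> simp

theorem boundedIndex_eq_sep (s k : ℕ) : boundedIndex (s + 1) (k + 1) =
    {p ∈ lowerIndex (s + 1) (k + 1) | p.2 (Fin.last k) ≤ p.1 (Fin.last s)} := by
  ext p
  refine ⟨fun ⟨hx, hy, hfirst, hlast⟩ => ⟨⟨hx, hy, hfirst⟩, hlast _ _ rfl⟩, ?_⟩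
  rintro ⟨⟨hx, hy, hfirst⟩, hle⟩
  refine ⟨hx, hy, hfirst, fun i j hi => ?_⟩
  obtain rfl : i = Fin.last s := Fin.ext hi
  exact (hy (Fin.le_last j)).trans hle

theorem snoc_init_mem_boundedIndex {p : (Fin (s + 1) → ℕ+) × (Fin (k + 1) → ℕ+)}
    (hp : p ∈ lowerIndex (s + 1) (k + 1)) (hlt : p.1 (Fin.last s) < p.2 (Fin.last k)) :
    (Fin.snoc (α := fun _ => ℕ+) p.1 (p.2 (Fin.last k)), Fin.init p.2) ∈
      boundedIndex (s + 2) k := by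
  obtain ⟨hx, hy, hfirst⟩ := hp
  refine ⟨Fin.strictMono_snoc hx fun i => (hx.monotone (Fin.le_last i)).trans_lt hlt,
    fun i j hij => hy (Fin.castSucc_le_castSucc_iff.2 hij), fun i j hi => ?_, fun i j hi => ?_⟩
  · obtain rfl : i = 0 := Fin.ext hi
    simpa [Fin.init] using hfirst 0 j.castSucc rfl
  · obtain rfl : i = Fin.last (s + 1) := Fin.ext hi
    simpa [Fin.init] using hy (Fin.le_last j.castSucc)

theorem init_snoc_mem_lowerIndex {p : (Fin (s + 2) → ℕ+) × (Fin k → ℕ+)}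
    (hp : p ∈ boundedIndex (s + 2) k) :
    (Fin.init p.1, Fin.snoc (α := fun _ => ℕ+) p.2 (p.1 (Fin.last (s + 1)))) ∈
      {q ∈ lowerIndex (s + 1) (k + 1) | q.1 (Fin.last s) < q.2 (Fin.last k)} := by
  obtain ⟨hx, hy, hfirst, hlast⟩ := hp
  refine ⟨⟨fun i j hij => hx (Fin.castSucc_lt_castSucc_iff.2 hij),
    Fin.monotone_snoc hy fun j => hlast _ j rfl, fun i j hi => ?_⟩,
    by simpa [Fin.init] using hx (Fin.castSucc_lt_last _)⟩
  obtain rfl : i = 0 := Fin.ext hi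
  induction j using Fin.lastCases with
  | last => simpa [Fin.init] using hx.monotone (Fin.zero_le (Fin.last (s + 1)))
  | cast j => simpa [Fin.init] using hfirst 0 j rfl

def lowerIndexLastLtEquiv (s k : ℕ) :
    {p ∈ lowerIndex (s + 1) (k + 1) | p.1 (Fin.last s) < p.2 (Fin.last k)} ≃
      boundedIndex (s + 2) k where
  toFun p := ⟨(Fin.snoc p.1.1 (p.1.2 (Fin.last k)), Fin.init p.1.2),
    snoc_init_mem_boundedIndex p.2.1 p.2.2⟩
  invFun p := ⟨(Fin.init p.1.1, Fin.snoc p.1.2 (p.1.1 (Fin.last (s + 1)))),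
    init_snoc_mem_lowerIndex p.2⟩
  left_inv p := by ext1; simp
  right_inv p := by ext1; simp

theorem ZLFin_eq_ZBFin_add_ZBFin (A : Fin (s + 1) → ℕ) (B : Fin (k + 1) → ℕ)
    (hA : ∀ i, 2 ≤ A i) (hB : ∀ j, 2 ≤ B j) :
    ZLFin A B =
      ZBFin A B + ZBFin (Fin.snoc (α := fun _ => ℕ) A (B (Fin.last k))) (Fin.init B) := by
  have hsplit : lowerIndex (s + 1) (k + 1) = boundedIndex (s + 1) (k + 1) ∪
      {p ∈ lowerIndex (s + 1) (k + 1) | p.1 (Fin.last s) < p.2 (Fin.last k)} := by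
    rw [boundedIndex_eq_sep, ← Set.sep_or]
    simp [le_or_gt]
  have hdisj : Disjoint (boundedIndex (s + 1) (k + 1))
      {p ∈ lowerIndex (s + 1) (k + 1) | p.1 (Fin.last s) < p.2 (Fin.last k)} := by
    rw [boundedIndex_eq_sep]
    exact Set.disjoint_left.2 fun p hle hlt => (not_lt.2 hle.2) hlt.2
  have hsum := summable_zetaMonomial_mul hA hB
  rw [ZLFin, hsplit, Summable.tsum_union_disjoint hdisj (hsum.subtype _) (hsum.subtype _)]
  congr 1
  rw [ZBFin, ← (lowerIndexLastLtEquiv s k).tsum_eq]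
  refine tsum_congr fun p => ?_
  simp only [lowerIndexLastLtEquiv, Equiv.coe_fn_mk, zetaMonomial, Fin.prod_univ_castSucc,
    Fin.snoc_castSucc, Fin.snoc_last, Fin.init]
  ring

end IndexSets

theorem ZB_nil (a : List ℕ) : ZB a [] = mz a := by
  let e : {p : (Fin a.length → ℕ+) × (Fin 0 → ℕ+) // p ∈ boundedIndex a.length 0} ≃
      {x : Fin a.length → ℕ+ // StrictMono x} :=
    (Equiv.prodUnique _ _).subtypeEquiv fun p =>
      ⟨fun h => h.1, fun h => ⟨h, fun i => i.elim0, fun _ j => j.elim0, fun _ j => j.elim0⟩⟩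
  rw [mz, ← e.tsum_eq]
  exact tsum_congr fun _ => mul_one _

theorem ZL_append_singleton {a b : List ℕ} {c : ℕ} (hne : a ≠ []) (ha : ∀ x ∈ a, 2 ≤ x)
    (hb : ∀ x ∈ b, 2 ≤ x) (hc : 2 ≤ c) :
    ZL a (b ++ [c]) = ZB a (b ++ [c]) + ZB (a ++ [c]) b := by
  obtain ⟨d, a, rfl⟩ := List.exists_cons_of_ne_nil hne
  have key := ZLFin_eq_ZBFin_add_ZBFin (d :: a).get (Fin.snoc (α := fun _ => ℕ) b.get c)
    (fun i => ha _ (List.get_mem _ _))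
    (Fin.lastCases (by simpa) fun j => by simpa using hb _ (List.get_mem _ _))
  rwa [Fin.snoc_last, Fin.init_snoc, ← ZL_ofFn, ← ZB_ofFn, ← ZB_ofFn, List.ofFn_snoc,
    List.ofFn_snoc, List.ofFn_get, List.ofFn_get] at key

theorem ZB_reverse_drop_take {l : List ℕ} (hl : ∀ x ∈ l, 2 ≤ x) {m : ℕ}
    (hm : m ≤ l.length - 1) :
    ZB (l.drop m).reverse (l.take m) = (-1) ^ m * mz l.reverse +
      ∑ k ∈ range m, (-1) ^ (m - (k + 1)) * ZL (l.drop (k + 1)).reverse (l.take (k + 1)) := by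
  have hstep : ∀ k < m, ZL (l.drop (k + 1)).reverse (l.take (k + 1)) =
      ZB (l.drop (k + 1)).reverse (l.take (k + 1)) + ZB (l.drop k).reverse (l.take k) := by
    intro k hk
    have hkl : k < l.length := by omega
    rw [List.drop_eq_getElem_cons hkl, List.reverse_cons, ← List.take_concat_get' l k hkl]
    refine ZL_append_singleton ?_ (fun x hx => hl x ?_) (fun x hx => hl x ?_)
      (hl _ (List.getElem_mem _))
    · simp only [ne_eq, List.reverse_eq_nil_iff, List.drop_eq_nil_iff]
      omega
    · exact List.mem_of_mem_drop (List.mem_reverse.1 hx)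
    · exact List.mem_of_mem_take hx
  simpa [ZB_nil] using alternating_telescope (fun k => ZB (l.drop k).reverse (l.take k))
    (fun k => ZL (l.drop k).reverse (l.take k)) m hstep

theorem ofFn_rev_eq_reverse_drop {α : Type*} {r n : ℕ} (a : Fin r → α) (hn : n ≤ r)
    (h : ∀ i : Fin n, r - 1 - i < r) :
    List.ofFn (fun i : Fin n => a ⟨r - 1 - i, h i⟩) = ((List.ofFn a).drop (r - n)).reverse := by
  apply List.ext_getElem (by simp; omega)
  intro i h₁ h₂
  simp only [List.getElem_ofFn, List.getElem_reverse, List.getElem_drop]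
  congr 2
  simp only [List.length_ofFn, List.length_reverse, List.length_drop] at h₁ h₂ ⊢
  omega

theorem ofFn_eq_take {α : Type*} {r m : ℕ} (a : Fin r → α) (h : ∀ i : Fin m, i.1 < r) :
    List.ofFn (fun i : Fin m => a ⟨i, h i⟩) = (List.ofFn a).take m := by
  have hmr : m ≤ r := by
    cases m with
    | zero => exact Nat.zero_le r
    | succ m => exact h (Fin.last m)
  apply List.ext_getElem (by simp; omega)
  intro i h₁ h₂
  simp

/-- For a tuple `(α₁,…,α_r)` with `αᵢ ≥ 2` for all `i` and `1 ≤ m ≤ r-1`: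
`Z_B(α_r,…,α_{m+1}; α₁,…,α_m) = (-1)^m ζ(α_r,…,α₁) + ∑_{k=1}^m (-1)^{m-k} Z_L(α_r,…,α_{k+1}; α₁,…,α_k)`. -/
theorem ZB_eq_mz_add_sum_ZL (r m : ℕ) (a : Fin r → ℕ)
    (hge : ∀ i, 2 ≤ a i) (hmr : m ≤ r - 1) :
    ZB (List.ofFn (fun i : Fin (r - m) => a ⟨r - 1 - i.1, by omega⟩))
       (List.ofFn (fun i : Fin m => a ⟨i.1, by have := i.isLt; omega⟩)) =
    (-1 : ℝ) ^ m * mz (List.ofFn (fun i : Fin r => a ⟨r - 1 - i.1, by omega⟩)) +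
      ∑ k : Fin m,
        (-1 : ℝ) ^ (m - (k.1 + 1)) *
          ZL (List.ofFn (fun i : Fin (r - (k.1 + 1)) =>
                a ⟨r - 1 - i.1, by omega⟩))
             (List.ofFn (fun i : Fin (k.1 + 1) =>
                a ⟨i.1, by have := i.isLt; have := k.isLt; omega⟩)) := by
  simp (disch := omega) only [ofFn_rev_eq_reverse_drop, ofFn_eq_take, Nat.sub_sub_self,
    Nat.sub_self, List.drop_zero]
  rw [Fin.sum_univ_eq_sum_range fun k => (-1 : ℝ) ^ (m - (k + 1)) *
    ZL ((List.ofFn a).drop (k + 1)).reverse ((List.ofFn a).take (k + 1))]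
  exact ZB_reverse_drop_take (List.forall_mem_ofFn_iff.2 hge) (by simpa using hmr)
end

section
/- For every integer m ≥ 0, ∑_{a+b=m, a,b ≥ 0} (a+1)(b+1)·ζ(a+2, b+2) = (m+1)·ζ(2)·ζ(m+2) + (m+1)·ζ(2, m+2) − 2·ζ(m+4) − 2·ζ(m+1, 3). -/
/-!
Fix indices `k₁ < k₂`, put `x = 1/k₁`, `y = 1/k₂` and `δ = k₂ - k₁`, so that
`x - y = δxy`. The weighted sum `∑_{a+b=m} (a+1)(b+1) x^{a+2} y^{b+2}` has the
partial-fraction expansion `(m+1)(x^{m+2} + y^{m+2})/δ² - 2(x^{m+1} - y^{m+1})/δ³`,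
which comes from a polynomial identity for `(x - y)³ ∑_{a+b=m} (a+1)(b+1) x^a y^b`.
Summing over `k₁ < k₂`, the first two terms give `ζ(2)ζ(m+2)` and `ζ(2, m+2)`. In the
last one, for fixed `δ` the sum over `k₁` telescopes to `∑_{j ≤ δ} j^{-m-1}`, and
`∑_{j ≤ δ} j^{-m-1} δ^{-3}` splits into `ζ(m+4)` (the terms `j = δ`) and `ζ(m+1, 3)`.
-/

open scoped BigOperators

open Finset Filter Topology

section PartialFractions

variable {R : Type*} [CommRing R]

theorem sub_sq_mul_sum_antidiagonal (m : ℕ) (x y : R) :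
    (x - y) ^ 2 * ∑ p ∈ antidiagonal m, ((p.2 : R) + 1) * (x ^ p.1 * y ^ p.2) =
      x ^ (m + 2) - ((m : R) + 2) * x * y ^ (m + 1) + ((m : R) + 1) * y ^ (m + 2) := by
  induction m with
  | zero => simp; ring
  | succ n ih =>
    have hshift : ∑ p ∈ antidiagonal n, ((p.2 : R) + 1) * (x ^ (p.1 + 1) * y ^ p.2) =
        x * ∑ p ∈ antidiagonal n, ((p.2 : R) + 1) * (x ^ p.1 * y ^ p.2) := by
      rw [mul_sum]; exact sum_congr rfl fun p _ ↦ by ring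
    rw [Nat.sum_antidiagonal_succ, hshift]
    push_cast
    linear_combination x * ih

theorem sub_pow_three_mul_sum_antidiagonal (m : ℕ) (x y : R) :
    (x - y) ^ 3 *
        ∑ p ∈ antidiagonal m, ((p.1 : R) + 1) * ((p.2 : R) + 1) * (x ^ p.1 * y ^ p.2) =
      ((m : R) + 1) * (x ^ (m + 2) + y ^ (m + 2)) * (x - y) -
        2 * x * y * (x ^ (m + 1) - y ^ (m + 1)) := by
  induction m with
  | zero => simp; ring
  | succ n ih =>
    have hshift : ∑ p ∈ antidiagonal n,
          (((p.1 + 1 : ℕ) : R) + 1) * ((p.2 : R) + 1) * (x ^ (p.1 + 1) * y ^ p.2) =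
        x * ∑ p ∈ antidiagonal n, ((p.1 : R) + 1) * ((p.2 : R) + 1) * (x ^ p.1 * y ^ p.2) +
          x * ∑ p ∈ antidiagonal n, ((p.2 : R) + 1) * (x ^ p.1 * y ^ p.2) := by
      rw [mul_sum, mul_sum, ← sum_add_distrib]
      exact sum_congr rfl fun p _ ↦ by push_cast; ring
    rw [Nat.sum_antidiagonal_succ, hshift]
    push_cast
    linear_combination x * ih + x * (x - y) * sub_sq_mul_sum_antidiagonal n x y

end PartialFractions

theorem sum_antidiagonal_one_div_pow_mul_one_div_pow {K : Type*} [Field K] {a b : K}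
    (ha : a ≠ 0) (hb : b ≠ 0) (hab : a ≠ b) (m : ℕ) :
    ∑ p ∈ antidiagonal m,
        ((p.1 : K) + 1) * ((p.2 : K) + 1) * (1 / a ^ (p.1 + 2) * (1 / b ^ (p.2 + 2))) =
      (m + 1) * (1 / a ^ (m + 2) * (1 / (b - a) ^ 2)) +
        (m + 1) * (1 / (b - a) ^ 2 * (1 / b ^ (m + 2))) -
        2 * (1 / (b - a) ^ 3 * (1 / a ^ (m + 1) - 1 / b ^ (m + 1))) := by
  have hba : b - a ≠ 0 := sub_ne_zero.mpr hab.symm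
  have hsub : a⁻¹ - b⁻¹ = (b - a) / (a * b) := by field_simp
  have hsub_ne : a⁻¹ - b⁻¹ ≠ 0 := by rw [hsub]; exact div_ne_zero hba (mul_ne_zero ha hb)
  have hsum := eq_div_of_mul_eq (pow_ne_zero 3 hsub_ne)
    ((mul_comm _ _).trans (sub_pow_three_mul_sum_antidiagonal m a⁻¹ b⁻¹))
  have hfactor : ∑ p ∈ antidiagonal m,
        ((p.1 : K) + 1) * ((p.2 : K) + 1) * (1 / a ^ (p.1 + 2) * (1 / b ^ (p.2 + 2))) =
      a⁻¹ ^ 2 * b⁻¹ ^ 2 *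
        ∑ p ∈ antidiagonal m,
          ((p.1 : K) + 1) * ((p.2 : K) + 1) * (a⁻¹ ^ p.1 * b⁻¹ ^ p.2) := by
    rw [mul_sum]
    exact sum_congr rfl fun _ _ ↦ by simp only [one_div, ← inv_pow, pow_add, mul_inv]; ring
  rw [hfactor, hsum, hsub]
  simp only [inv_pow]
  field_simp

theorem tsum_sub_nat_add_eq_sum_range {G : Type*} [AddCommGroup G] [TopologicalSpace G]
    [IsTopologicalAddGroup G] [T2Space G] {f : ℕ → G} (hf : Tendsto f atTop (𝓝 0)) (c : ℕ)
    (hs : Summable fun k ↦ f k - f (k + c)) :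
    ∑' k, (f k - f (k + c)) = ∑ j ∈ range c, f j := by
  have hpartial : ∀ N, ∑ k ∈ range N, (f k - f (k + c)) =
      ∑ j ∈ range c, f j - ∑ j ∈ range c, f (N + j) := by
    intro N
    have h := (sum_range_add f N c).symm.trans (add_comm N c ▸ sum_range_add f c N)
    simp only [add_comm _ c] at h ⊢
    rw [sum_sub_distrib, sub_eq_sub_iff_add_eq_add, h]
  have htail : Tendsto (fun N ↦ ∑ j ∈ range c, f (N + j)) atTop (𝓝 0) := by
    simpa using tendsto_finsetSum (range c) fun j _ ↦ hf.comp (tendsto_add_atTop_nat j)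
  refine tendsto_nhds_unique hs.hasSum.tendsto_sum_nat ?_
  simpa [hpartial] using tendsto_const_nhds.sub htail

section Antidiagonal

variable {α A : Type*} [AddCommMonoid α] [TopologicalSpace α] [ContinuousAdd α] [T3Space α]
  [AddCommMonoid A] [HasAntidiagonal A] {f : A × A → α}

theorem Summable.sum_antidiagonal (hf : Summable f) :
    Summable fun n ↦ ∑ x ∈ antidiagonal n, f x := by
  have hσ : Summable fun x ↦ f (HasAntidiagonal.sigmaAntidiagonalEquivProd x) :=
    HasAntidiagonal.sigmaAntidiagonalEquivProd.summable_iff.mpr hf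
  simpa [Finset.tsum_subtype, sum_attach] using hσ.sigma' fun n ↦ (hasSum_fintype _).summable

theorem Summable.tsum_eq_tsum_sum_antidiagonal (hf : Summable f) :
    ∑' x, f x = ∑' n, ∑ x ∈ antidiagonal n, f x := by
  have hσ : Summable fun x ↦ f (HasAntidiagonal.sigmaAntidiagonalEquivProd x) :=
    HasAntidiagonal.sigmaAntidiagonalEquivProd.summable_iff.mpr hf
  rw [← HasAntidiagonal.sigmaAntidiagonalEquivProd.tsum_eq,
    hσ.tsum_sigma' fun n ↦ (hasSum_fintype _).summable]
  simp [sum_attach]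

end Antidiagonal

noncomputable def zetaTerm (s n : ℕ) : ℝ := 1 / ((n : ℝ) + 1) ^ s

/-- The pair `(k, d)` stands for the indices `k + 1 < k + d + 2` of a double zeta value. -/
noncomputable def doubleZetaTerm (p q : ℕ) (x : ℕ × ℕ) : ℝ :=
  zetaTerm p x.1 * zetaTerm q (x.1 + x.2 + 1)

noncomputable def zetaDiffTerm (s : ℕ) (x : ℕ × ℕ) : ℝ :=
  zetaTerm 3 x.2 * (zetaTerm s x.1 - zetaTerm s (x.1 + x.2 + 1))

theorem zetaTerm_nonneg (s n : ℕ) : 0 ≤ zetaTerm s n := by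
  unfold zetaTerm; positivity

theorem summable_zetaTerm {s : ℕ} (hs : 2 ≤ s) : Summable (zetaTerm s) :=
  ((summable_nat_add_iff 1).mpr (Real.summable_one_div_nat_pow.mpr hs)).congr fun n ↦ by
    simp [zetaTerm]

theorem tendsto_zetaTerm_atTop_nhds_zero (s : ℕ) : Tendsto (zetaTerm (s + 1)) atTop (𝓝 0) := by
  have h : Tendsto (fun n : ℕ ↦ ((n : ℝ) + 1) ^ (s + 1)) atTop atTop :=
    (tendsto_pow_atTop s.succ_ne_zero).comp
      (tendsto_natCast_atTop_atTop.atTop_add tendsto_const_nhds)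
  exact h.inv_tendsto_atTop.congr fun n ↦ by simp [zetaTerm]

theorem doubleZetaTerm_le {p q : ℕ} (hp : 1 ≤ p) (hq : 2 ≤ q) (hpq : 4 ≤ p + q)
    (x : ℕ × ℕ) :
    doubleZetaTerm p q x ≤ zetaTerm 2 x.1 * zetaTerm 2 x.2 := by
  obtain ⟨k, d⟩ := x
  simp only [doubleZetaTerm, zetaTerm, one_div_mul_one_div]
  push_cast
  set a : ℝ := k + 1
  set c : ℝ := d + 1
  have ha : 1 ≤ a := by simp [a]
  have hc : 1 ≤ c := by simp [c]
  rw [show (k : ℝ) + d + 1 + 1 = a + c by ring]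
  refine one_div_le_one_div_of_le (by positivity) ?_
  rcases hp.eq_or_lt with rfl | hp2
  · calc a ^ 2 * c ^ 2 = a ^ 1 * (a * c ^ 2) := by ring
      _ ≤ a ^ 1 * ((a + c) * (a + c) ^ 2) := by gcongr <;> linarith
      _ ≤ a ^ 1 * (a + c) ^ q := by
        rw [← pow_succ']
        exact mul_le_mul_of_nonneg_left (pow_le_pow_right₀ (by linarith) (by omega))
          (by positivity)
  · calc a ^ 2 * c ^ 2 ≤ a ^ p * (a + c) ^ 2 := by
          gcongr
          · exact hp2
          · linarith
      _ ≤ a ^ p * (a + c) ^ q := by gcongr; linarith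

theorem summable_doubleZetaTerm {p q : ℕ} (hp : 1 ≤ p) (hq : 2 ≤ q) (hpq : 4 ≤ p + q) :
    Summable (doubleZetaTerm p q) :=
  Summable.of_nonneg_of_le (fun _ ↦ mul_nonneg (zetaTerm_nonneg _ _) (zetaTerm_nonneg _ _))
    (doubleZetaTerm_le hp hq hpq)
    ((summable_zetaTerm le_rfl).mul_of_nonneg (summable_zetaTerm le_rfl) (zetaTerm_nonneg 2)
      (zetaTerm_nonneg 2))

def strictMonoFinTwoEquiv : ℕ × ℕ ≃ {k : Fin 2 → ℕ+ // StrictMono k} where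
  toFun x := ⟨![x.1.succPNat, (x.1 + x.2 + 1).succPNat], by
    simp [Fin.strictMono_iff_lt_succ, ← PNat.coe_lt_coe]⟩
  invFun k := ((k.1 0).natPred, (k.1 1).natPred - (k.1 0).natPred - 1)
  left_inv x := by ext <;> simp; omega
  right_inv k := by
    have h01 : (k.1 0 : ℕ) < k.1 1 := k.2 (show (0 : Fin 2) < 1 by decide)
    have h0 := (k.1 0).pos
    ext i
    fin_cases i <;> apply PNat.eq <;> simp [PNat.natPred] <;> omega

theorem mz_singleton (s : ℕ) : mz [s] = ∑' n, zetaTerm s n := by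
  let e : {k : Fin 1 → ℕ+ // StrictMono k} ≃ ℕ :=
    (Equiv.subtypeUnivEquiv Subsingleton.strictMono).trans
      ((Equiv.funUnique (Fin 1) ℕ+).trans Equiv.pnatEquivNat)
  refine (e.symm.tsum_eq (fun k : {k : Fin 1 → ℕ+ // StrictMono k} ↦
    ∏ i, (1 : ℝ) / ((k.1 i : ℕ) : ℝ) ^ [s].get i)).symm.trans (tsum_congr fun n ↦ ?_)
  simp [e, zetaTerm]

theorem mz_pair (p q : ℕ) : mz [p, q] = ∑' x, doubleZetaTerm p q x := by
  refine (strictMonoFinTwoEquiv.tsum_eq (fun k : {k : Fin 2 → ℕ+ // StrictMono k} ↦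
    ∏ i, (1 : ℝ) / ((k.1 i : ℕ) : ℝ) ^ [p, q].get i)).symm.trans (tsum_congr fun x ↦ ?_)
  simp [strictMonoFinTwoEquiv, doubleZetaTerm, zetaTerm, Fin.prod_univ_two, mul_comm]

theorem hasSum_zetaTerm {s : ℕ} (hs : 2 ≤ s) : HasSum (zetaTerm s) (mz [s]) :=
  mz_singleton s ▸ (summable_zetaTerm hs).hasSum

theorem hasSum_doubleZetaTerm {p q : ℕ} (hp : 1 ≤ p) (hq : 2 ≤ q) (hpq : 4 ≤ p + q) :
    HasSum (doubleZetaTerm p q) (mz [p, q]) :=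
  mz_pair p q ▸ (summable_doubleZetaTerm hp hq hpq).hasSum

theorem sum_antidiagonal_doubleZetaTerm (p q n : ℕ) :
    ∑ x ∈ antidiagonal n, doubleZetaTerm p q x =
      zetaTerm q (n + 1) * ∑ j ∈ range (n + 1), zetaTerm p j := by
  rw [mul_comm, sum_mul, Nat.sum_antidiagonal_eq_sum_range_succ_mk]
  refine sum_congr rfl fun j hj ↦ ?_
  rw [doubleZetaTerm, Nat.add_sub_cancel' (Nat.lt_succ_iff.mp (mem_range.mp hj))]

theorem summable_zetaTerm_mul_sum_range {p q : ℕ} (hp : 1 ≤ p) (hq : 2 ≤ q)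
    (hpq : 4 ≤ p + q) :
    Summable fun n ↦ zetaTerm q (n + 1) * ∑ j ∈ range (n + 1), zetaTerm p j := by
  simpa only [sum_antidiagonal_doubleZetaTerm] using
    (summable_doubleZetaTerm hp hq hpq).sum_antidiagonal

theorem mz_pair_eq_tsum_sum_range {p q : ℕ} (hp : 1 ≤ p) (hq : 2 ≤ q) (hpq : 4 ≤ p + q) :
    mz [p, q] = ∑' n, zetaTerm q (n + 1) * ∑ j ∈ range (n + 1), zetaTerm p j := by
  simp only [mz_pair, (summable_doubleZetaTerm hp hq hpq).tsum_eq_tsum_sum_antidiagonal,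
    sum_antidiagonal_doubleZetaTerm]

theorem tsum_zetaDiffTerm_fiber (s d : ℕ) (h : Summable fun k ↦ zetaDiffTerm (s + 1) (k, d)) :
    ∑' k, zetaDiffTerm (s + 1) (k, d) =
      zetaTerm 3 d * ∑ j ∈ range (d + 1), zetaTerm (s + 1) j := by
  have hd : zetaTerm 3 d ≠ 0 := by unfold zetaTerm; positivity
  have htel : Summable fun k ↦ zetaTerm (s + 1) k - zetaTerm (s + 1) (k + (d + 1)) :=
    (summable_mul_left_iff hd).mp h
  simp only [zetaDiffTerm, tsum_mul_left, add_assoc]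
  rw [tsum_sub_nat_add_eq_sum_range (tendsto_zetaTerm_atTop_nhds_zero s) (d + 1) htel]

theorem tsum_zetaDiffTerm (m : ℕ) (h : Summable (zetaDiffTerm (m + 1))) :
    ∑' x, zetaDiffTerm (m + 1) x = mz [m + 4] + mz [m + 1, 3] := by
  set v : ℕ → ℝ := fun d ↦ zetaTerm 3 d * ∑ j ∈ range d, zetaTerm (m + 1) j
  have hv : Summable fun n ↦ v (n + 1) :=
    summable_zetaTerm_mul_sum_range (by omega) (by norm_num) (by omega)
  have hsplit : ∀ d, zetaTerm 3 d * ∑ j ∈ range (d + 1), zetaTerm (m + 1) j =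
      zetaTerm (m + 4) d + v d := by
    intro d
    rw [sum_range_succ, mul_add, add_comm]
    congr 1
    simp only [zetaTerm, one_div_mul_one_div, ← pow_add]
    ring_nf
  calc ∑' x, zetaDiffTerm (m + 1) x = ∑' x : ℕ × ℕ, zetaDiffTerm (m + 1) x.swap :=
        ((Equiv.prodComm ℕ ℕ).tsum_eq _).symm
    _ = ∑' d, ∑' k, zetaDiffTerm (m + 1) (k, d) := h.prod_symm.tsum_prod
    _ = ∑' d, zetaTerm 3 d * ∑ j ∈ range (d + 1), zetaTerm (m + 1) j :=
        tsum_congr fun d ↦ tsum_zetaDiffTerm_fiber m d (h.prod_symm.prod_factor d)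
    _ = ∑' d, zetaTerm (m + 4) d + ∑' d, v d := by
        rw [tsum_congr hsplit,
          (summable_zetaTerm (s := m + 4) (by omega)).tsum_add ((summable_nat_add_iff 1).mp hv)]
    _ = mz [m + 4] + mz [m + 1, 3] := by
        rw [mz_singleton, mz_pair_eq_tsum_sum_range (by omega) (by norm_num) (by omega),
          tsum_eq_zero_add' hv]
        simp [v]

theorem sum_antidiagonal_mul_doubleZetaTerm (m : ℕ) (x : ℕ × ℕ) :
    ∑ p ∈ antidiagonal m,
        ((p.1 : ℝ) + 1) * ((p.2 : ℝ) + 1) * doubleZetaTerm (p.1 + 2) (p.2 + 2) x =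
      (m + 1) * (zetaTerm (m + 2) x.1 * zetaTerm 2 x.2) +
        (m + 1) * doubleZetaTerm 2 (m + 2) x.swap - 2 * zetaDiffTerm (m + 1) x := by
  obtain ⟨k, d⟩ := x
  have hba : ((k + d + 1 : ℕ) : ℝ) + 1 - ((k : ℝ) + 1) = (d : ℝ) + 1 := by push_cast; ring
  have hpf := sum_antidiagonal_one_div_pow_mul_one_div_pow (a := (k : ℝ) + 1)
    (b := ((k + d + 1 : ℕ) : ℝ) + 1) (by positivity) (by positivity)
    (by rw [ne_comm, ← sub_ne_zero, hba]; positivity) m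
  rw [hba] at hpf
  simpa [doubleZetaTerm, zetaDiffTerm, zetaTerm, add_comm d k] using hpf

/-- For every integer `m ≥ 0`,
`∑_{a+b=m} (a+1)(b+1) ζ(a+2, b+2) = (m+1) ζ(2) ζ(m+2) + (m+1) ζ(2, m+2) − 2 ζ(m+4) − 2 ζ(m+1, 3)`. -/
theorem weighted_sum_double_zeta (m : ℕ) :
    ∑ x ∈ Finset.HasAntidiagonal.antidiagonal m,
      ((x.1 : ℝ) + 1) * ((x.2 : ℝ) + 1) * mz [x.1 + 2, x.2 + 2] =
    ((m : ℝ) + 1) * mz [2] * mz [m + 2] + ((m : ℝ) + 1) * mz [2, m + 2]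
      - 2 * mz [m + 4] - 2 * mz [m + 1, 3] := by
  have hS := hasSum_sum fun p (_ : p ∈ antidiagonal m) ↦
    (hasSum_doubleZetaTerm (p := p.1 + 2) (q := p.2 + 2) (by omega) le_add_self
      (by omega)).mul_left (((p.1 : ℝ) + 1) * ((p.2 : ℝ) + 1))
  have hA : HasSum (fun x : ℕ × ℕ ↦ zetaTerm (m + 2) x.1 * zetaTerm 2 x.2)
      (mz [m + 2] * mz [2]) :=
    (hasSum_zetaTerm (by omega)).mul (hasSum_zetaTerm le_rfl)
      ((summable_zetaTerm (by omega)).mul_of_nonneg (summable_zetaTerm le_rfl) (zetaTerm_nonneg _)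
        (zetaTerm_nonneg _))
  have hB : HasSum (fun x : ℕ × ℕ ↦ doubleZetaTerm 2 (m + 2) x.swap) (mz [2, m + 2]) :=
    (Equiv.prodComm ℕ ℕ).hasSum_iff.mpr
      (hasSum_doubleZetaTerm one_le_two le_add_self (by omega))
  have hT := ((((hA.mul_left ((m : ℝ) + 1)).add (hB.mul_left ((m : ℝ) + 1))).sub hS).div_const
    2).congr_fun fun x ↦ show zetaDiffTerm (m + 1) x = _ by
      rw [sum_antidiagonal_mul_doubleZetaTerm]; ring
  have hdiff := tsum_zetaDiffTerm m hT.summable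
  rw [hT.tsum_eq] at hdiff
  linear_combination -2 * hdiff
end
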